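/- arXiv:1304.5633 — 4 statements merged into one kernel-verified Lean document; each statement's English description precedes it below -/
import Mathlib

section
/- A labeled graph G (possibly with multiple edges, no loops, edges labeled by positive integers representing call times) is a k-fault-tolerant gossip graph if and only if between every ordered pair of distinct vertices there exist at least k+1 pairwise edge-disjoint ascending paths. -/
/-- A labeled (multi)graph: `m` edges indexed by `Fin m`, each edge being an
unordered pair of vertices (a call), labeled by the time at which the call occurs. -/
structure LabeledGraph (V : Type) where
  m : ℕ
  ends : Fin m → Sym2 V
  label : Fin m → ℕ

namespace LabeledGraph

variable {V : Type}

lemma pos_right_of_fin {a b : ℕ} (e : Fin (a * b)) : 0 < b := by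
  rcases Nat.eq_zero_or_pos b with h | h
  · exact absurd e.isLt (by simp [h])
  · exact h

/-- The maximal label occurring in `G`. -/
def maxLabel (G : LabeledGraph V) : ℕ :=
  Finset.univ.sup fun e => G.label e

/-- `G.IsWalk u v es` : the list of edges `es` forms a walk from `u` to `v`. -/
inductive IsWalk (G : LabeledGraph V) : V → V → List (Fin G.m) → Prop
  | nil (v : V) : IsWalk G v v []
  | cons {u w v : V} {e : Fin G.m} {es : List (Fin G.m)} :
      G.ends e = s(u, w) → IsWalk G w v es → IsWalk G u v (e :: es)

/-- An ascending path from `u` to `v`: a walk whose labels strictly increase. -/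
def IsAscPath (G : LabeledGraph V) (u v : V) (es : List (Fin G.m)) : Prop :=
  G.IsWalk u v es ∧ List.Chain' (· < ·) (es.map G.label)

/-- Number of descents (non-increases) in a list of labels. -/
def descents : List ℕ → ℕ
  | a :: b :: rest => (if b ≤ a then 1 else 0) + descents (b :: rest)
  | _ => 0

/-- An `s`-folded ascending path from `u` to `v`: a walk using `s`-many “folds”,
i.e. a concatenation of `s+1` maximal ascending subpaths. -/
def IsFoldedPath (G : LabeledGraph V) (u v : V) (es : List (Fin G.m)) (s : ℕ) : Prop :=
  G.IsWalk u v es ∧ es.Nodup ∧ descents (es.map G.label) = s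

/-- `G` is a `k`-fault-tolerant gossip graph: after deleting any `≤ k` edges, every
ordered pair of vertices is still joined by an ascending path. -/
def IsFaultTolerant (G : LabeledGraph V) (k : ℕ) : Prop :=
  ∀ F : Finset (Fin G.m), F.card ≤ k →
    ∀ u v : V, ∃ es : List (Fin G.m), G.IsAscPath u v es ∧ ∀ e ∈ es, e ∉ F

/-- Edge sum of two labeled graphs: labels of `G₂` are shifted above those of `G₁`. -/
def edgeSum (G₁ G₂ : LabeledGraph V) : LabeledGraph V where
  m := G₁.m + G₂.m
  ends := fun e =>
    if hlt : e.val < G₁.m then G₁.ends ⟨e.val, hlt⟩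
    else G₂.ends ⟨e.val - G₁.m, by have := e.isLt; omega⟩
  label := fun e =>
    if hlt : e.val < G₁.m then G₁.label ⟨e.val, hlt⟩
    else G₂.label ⟨e.val - G₁.m, by have := e.isLt; omega⟩ + G₁.maxLabel

/-- Edge sum `hG` of `h` identical copies of `G`; the `i`-th copy has labels shifted
up by `i · maxLabel G`. -/
def hCopy (G : LabeledGraph V) (h : ℕ) : LabeledGraph V where
  m := h * G.m
  ends := fun e => G.ends ⟨e.val % G.m, Nat.mod_lt _ (pos_right_of_fin e)⟩
  label := fun e =>
    G.label ⟨e.val % G.m, Nat.mod_lt _ (pos_right_of_fin e)⟩ + (e.val / G.m) * G.maxLabel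

/-- The copy of an edge `e` of `G` in the `i`-th copy inside `hG`. -/
def copyEdge (G : LabeledGraph V) {h : ℕ} (i : Fin h) (e : Fin G.m) : Fin (G.hCopy h).m :=
  ⟨i.val * G.m + e.val, by
    show i.val * G.m + e.val < h * G.m
    calc i.val * G.m + e.val < (i.val + 1) * G.m := by rw [Nat.succ_mul]; omega
    _ ≤ h * G.m := Nat.mul_le_mul_right _ i.isLt⟩

/-- `τ(n,k)`: the minimum number of edges (calls) of a `k`-fault-tolerant gossip
graph (scheme) on `n` nodes. -/
noncomputable def tau (n k : ℕ) : ℕ :=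
  sInf {c | ∃ G : LabeledGraph (Fin n), G.m = c ∧ G.IsFaultTolerant k}

/-- The Knödel graph `W_{Δ,n}` on `n = 2h` vertices: for each `j < h` and each
`l ∈ {1,…,Δ}` an edge labeled `l` between `(1,j)` and `(2, (j + 2^{l-1} - 1) mod h)`
(here `Fin 2` value `0` plays the role of `1`, and `1` the role of `2`). -/
def knodel (Δ h : ℕ) : LabeledGraph (Fin 2 × Fin h) where
  m := Δ * h
  ends := fun e =>
    have hh : 0 < h := pos_right_of_fin e
    s( ((0 : Fin 2), ⟨e.val % h, Nat.mod_lt _ hh⟩),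
       ((1 : Fin 2), ⟨(e.val % h + (2 ^ (e.val / h) - 1)) % h, Nat.mod_lt _ hh⟩) )
  label := fun e => e.val / h + 1

/-- The interval `R((α,β);(γ,δ))` in the Knödel graph on `2h` vertices (it does not
depend on `γ`); vertex class `0` plays the role of `1`, class `1` the role of `2`. -/
def knodelInterval (h : ℕ) (α : Fin 2) (β δ : ℕ) : ℕ :=
  if α = 0 then (if β ≤ δ then δ - β else h - (β - δ))
  else (if δ ≤ β then β - δ else h - (δ - β))

/-- The labeled wheel graph on `n = 2k+1` vertices: center `none` (vertex `u`),
rim vertices `some (i, 0) = vᵢ` and `some (i, 1) = vᵢ'`; edges `(vᵢ,vᵢ')` labeled 1,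
`(vᵢ',u)` labeled 2, `(vᵢ,u)` labeled 3, `(vᵢ', v_{i+1})` labeled 4. -/
def wheel (k : ℕ) : LabeledGraph (Option (Fin k × Fin 2)) where
  m := 4 * k
  ends := fun e =>
    have hk : 0 < k := pos_right_of_fin e
    let i : Fin k := ⟨e.val % k, Nat.mod_lt _ hk⟩
    if e.val / k = 0 then s(some (i, 0), some (i, 1))
    else if e.val / k = 1 then s(some (i, 1), none)
    else if e.val / k = 2 then s(some (i, 0), none)
    else s(some (i, 1), some (⟨(i.val + 1) % k, Nat.mod_lt _ hk⟩, 0))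
  label := fun e => e.val / k + 1

/-- A labeled graph is a valid (timed) schedule when simultaneous calls form a
matching: no two distinct edges with the same label share a vertex. -/
def IsMatchingSchedule (G : LabeledGraph V) : Prop :=
  ∀ e e' : Fin G.m, e ≠ e' → G.label e = G.label e' →
    ∀ v : V, ¬(v ∈ G.ends e ∧ v ∈ G.ends e')

/-- `T(n,k)`: the minimum completion time of a `k`-fault-tolerant gossip scheme on
`n` nodes in which non-overlapping pairs may call simultaneously. -/
noncomputable def minTime (n k : ℕ) : ℕ :=
  sInf {t | ∃ G : LabeledGraph (Fin n),
    G.IsMatchingSchedule ∧ G.IsFaultTolerant k ∧ G.maxLabel ≤ t}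

end LabeledGraph

/-!
Deleting `k` edges cannot meet all of `k + 1` edge-disjoint paths, which gives one direction.
For the other, pass to the digraph on the darts (oriented edges) of `G` with an arc `d → d'`
when `d` ends where `d'` starts and carries a smaller label: ascending `u`–`v` paths are the
chains from darts leaving `u` to darts entering `v`, so fault tolerance says that no `k` darts
meet all these chains. Menger's theorem for vertex-disjoint chains then gives `k + 1` pairwise
disjoint dart chains. It is proved by induction on the number of arcs: if removing an arc
`x → y` leaves no separator of size `k`, induct; otherwise such a separator `C` makes `C ∪ {x}`
and `C ∪ {y}` separators of size `k + 1`, and linkages from `S` onto `C ∪ {x}` and from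
`C ∪ {y}` to `T`, found by induction, glue along `C` and the arc `x → y`. Finally, two
dart-disjoint chains may still share an edge, traversed in opposite directions; exchanging their
tails there shortens the linkage, so a shortest linkage is edge-disjoint.
-/

namespace List

variable {A : Type*}

theorem exists_eq_append_cons_of_exists_mem_last {p : A → Prop} :
    ∀ {l : List A}, (∃ a ∈ l, p a) → ∃ l₁ b l₂, l = l₁ ++ b :: l₂ ∧ p b ∧ ∀ a ∈ l₂, ¬p a
  | [], h => by simp at h
  | a :: t, h => by
    by_cases ht : ∃ a ∈ t, p a
    · obtain ⟨l₁, b, l₂, rfl, hb, hl₂⟩ := exists_eq_append_cons_of_exists_mem_last ht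
      exact ⟨a :: l₁, b, l₂, rfl, hb, hl₂⟩
    · push Not at ht
      refine ⟨[], a, t, rfl, ?_, ht⟩
      obtain ⟨c, hc, hpc⟩ := h
      rcases mem_cons.mp hc with rfl | hc
      · exact hpc
      · exact absurd hpc (ht c hc)

end List

theorem Finset.notMem_and_card_eq_of_lt_card_insert {A : Type*} [DecidableEq A] {C : Finset A}
    {z : A} {k : ℕ} (hC : C.card ≤ k) (h : k < (insert z C).card) : z ∉ C ∧ C.card = k := by
  have hzC : z ∉ C := fun hz => by
    rw [Finset.insert_eq_of_mem hz] at h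
    omega
  rw [Finset.card_insert_of_notMem hzC] at h
  exact ⟨hzC, by omega⟩

section Linkage

variable {A : Type*} {R R₀ : A → A → Prop} {S T X Y C : Set A} {l : List A}

def IsChainFromTo (R : A → A → Prop) (S T : Set A) (l : List A) : Prop :=
  l.IsChain R ∧ (∃ a ∈ l.head?, a ∈ S) ∧ ∃ b ∈ l.getLast?, b ∈ T

def Separates (R : A → A → Prop) (S T C : Set A) : Prop :=
  ∀ l, IsChainFromTo R S T l → ∃ c ∈ l, c ∈ C

def IsLinkage {ι : Type*} (R : A → A → Prop) (S T : Set A) (P : ι → List A) : Prop :=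
  (∀ i, IsChainFromTo R S T (P i)) ∧ Pairwise fun i j => (P i).Disjoint (P j)

theorem IsChainFromTo.mono (h : ∀ a b, R₀ a b → R a b) (hl : IsChainFromTo R₀ S T l) :
    IsChainFromTo R S T l :=
  ⟨hl.1.imp h, hl.2⟩

theorem IsLinkage.mono {ι : Type*} {P : ι → List A} (h : ∀ a b, R₀ a b → R a b)
    (hP : IsLinkage R₀ S T P) : IsLinkage R S T P :=
  ⟨fun i => (hP.1 i).mono h, hP.2⟩

theorem IsLinkage.comp {ι κ : Type*} {P : ι → List A} (hP : IsLinkage R S T P) {e : κ → ι}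
    (he : e.Injective) : IsLinkage R S T (P ∘ e) :=
  ⟨fun i => hP.1 (e i), fun _ _ hij => hP.2 (he.ne hij)⟩

theorem isChainFromTo_reverse : IsChainFromTo R S T l.reverse ↔ IsChainFromTo (flip R) T S l := by
  simp only [IsChainFromTo, List.isChain_reverse, List.head?_reverse, List.getLast?_reverse]
  exact ⟨fun ⟨h, hS, hT⟩ => ⟨h, hT, hS⟩, fun ⟨h, hT, hS⟩ => ⟨h, hS, hT⟩⟩

theorem separates_flip : Separates (flip R) T S C ↔ Separates R S T C := by
  constructor
  · intro h l hl
    simpa using h l.reverse (isChainFromTo_reverse.mp (by simpa using hl))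
  · intro h l hl
    simpa using h l.reverse (isChainFromTo_reverse.mpr hl)

theorem IsChainFromTo.append {l₁ l₂ : List A} (h₁ : IsChainFromTo R S X l₁)
    (h₂ : IsChainFromTo R Y T l₂) (h : ∀ a ∈ l₁.getLast?, ∀ b ∈ l₂.head?, R a b) :
    IsChainFromTo R S T (l₁ ++ l₂) := by
  obtain ⟨a, ha, haS⟩ := h₁.2.1
  obtain ⟨b, hb, hbT⟩ := h₂.2.2
  refine ⟨List.isChain_append.mpr ⟨h₁.1, h₂.1, h⟩, ⟨a, ?_, haS⟩, ⟨b, ?_, hbT⟩⟩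
  · simp_all [List.head?_append]
  · simp_all [List.getLast?_append]

theorem IsChainFromTo.splice {l₁ l₂ m₁ m₂ : List A} {w : A}
    (h₁ : IsChainFromTo R S X (l₁ ++ w :: l₂)) (h₂ : IsChainFromTo R Y T (m₁ ++ w :: m₂)) :
    IsChainFromTo R S T (l₁ ++ w :: m₂) := by
  obtain ⟨a, ha, haS⟩ := h₁.2.1
  obtain ⟨b, hb, hbT⟩ := h₂.2.2
  refine ⟨List.isChain_split.mpr ⟨(List.isChain_split.mp h₁.1).1,
    (List.isChain_split.mp h₂.1).2⟩, ⟨a, ?_, haS⟩, ⟨b, ?_, hbT⟩⟩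
  · simp_all [List.head?_append]
  · simp_all [List.getLast?_append]

theorem IsChainFromTo.exists_eq_append_cons_last (hl : IsChainFromTo R S T l)
    (hX : ∃ a ∈ l, a ∈ X) :
    ∃ l₁ b l₂, l = l₁ ++ b :: l₂ ∧ (∀ a ∈ l₂, a ∉ X) ∧ IsChainFromTo R X T (b :: l₂) := by
  obtain ⟨l₁, b, l₂, rfl, hb, hl₂⟩ := List.exists_eq_append_cons_of_exists_mem_last hX
  obtain ⟨c, hc, hcT⟩ := hl.2.2
  refine ⟨l₁, b, l₂, rfl, hl₂, (List.isChain_split.mp hl.1).2, ⟨b, rfl, hb⟩, c, ?_, hcT⟩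
  simp_all [List.getLast?_append]

theorem List.IsChain.isChain_or_mem {x y : A} (hl : l.IsChain R)
    (hR : ∀ a b, R a b → R₀ a b ∨ a = x ∧ b = y) : l.IsChain R₀ ∨ x ∈ l ∧ y ∈ l := by
  induction hl with
  | nil => exact Or.inl .nil
  | singleton a => exact Or.inl (.singleton a)
  | @cons_cons a b l hab _ ih =>
    rcases hR a b hab with hab | ⟨rfl, rfl⟩
    · rcases ih with h | ⟨hx, hy⟩
      · exact Or.inl (.cons_cons hab h)
      · exact Or.inr ⟨.tail _ hx, .tail _ hy⟩
    · exact Or.inr ⟨.head _, .tail _ (.head _)⟩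

theorem Separates.insert_of_arc {x y z : A} (hR : ∀ a b, R a b → R₀ a b ∨ a = x ∧ b = y)
    (hC : Separates R₀ S T C) (hz : z = x ∨ z = y) : Separates R S T (insert z C) := by
  intro l hl
  rcases hl.1.isChain_or_mem hR with h | ⟨hx, hy⟩
  · obtain ⟨c, hc, hcC⟩ := hC l ⟨h, hl.2⟩
    exact ⟨c, hc, Or.inr hcC⟩
  · exact ⟨z, by rcases hz with rfl | rfl <;> assumption, Or.inl rfl⟩

theorem Separates.of_separates_from (hR : ∀ a b, R a b → b ∉ Y → R₀ a b)
    (hY : Separates R S T Y) (hC : Separates R₀ Y T C) : Separates R S T C := by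
  intro l hl
  obtain ⟨l₁, b, l₂, rfl, hl₂, hb⟩ := hl.exists_eq_append_cons_last (hY l hl)
  obtain ⟨c, hc, hcC⟩ :=
    hC (b :: l₂) ⟨hb.1.imp_of_mem_tail_imp fun a c _ hc h => hR a c h (hl₂ c hc), hb.2⟩
  exact ⟨c, List.mem_append_right _ hc, hcC⟩

theorem Separates.of_separates_to (hR : ∀ a b, R a b → a ∉ X → R₀ a b)
    (hX : Separates R S T X) (hC : Separates R₀ S X C) : Separates R S T C :=
  separates_flip.mp <| Separates.of_separates_from (R := flip R) (R₀ := flip R₀)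
    (fun a b h hb => hR b a h hb) (separates_flip.mpr hX) (separates_flip.mpr hC)

def IsLinkageFrom (R : A → A → Prop) (Y T : Set A) (g : A → List A) : Prop :=
  (∀ β ∈ Y, IsChainFromTo R Y T (β :: g β) ∧ ∀ a ∈ g β, a ∉ Y) ∧
    Y.Pairwise fun β γ => (β :: g β).Disjoint (γ :: g γ)

def IsLinkageOnto (R : A → A → Prop) (S X : Set A) (f : A → List A) : Prop :=
  (∀ α ∈ X, IsChainFromTo R S X (f α ++ [α]) ∧ ∀ a ∈ f α, a ∉ X) ∧
    X.Pairwise fun α β => (f α ++ [α]).Disjoint (f β ++ [β])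

theorem IsLinkage.exists_isLinkageFrom {ι : Type*} [Fintype ι] {P : ι → List A} {Y : Finset A}
    (hP : IsLinkage R Y T P) (hY : Y.card ≤ Fintype.card ι) : ∃ g, IsLinkageFrom R Y T g := by
  classical
  have hsplit (i : ι) : ∃ l₁ b l₂, P i = l₁ ++ b :: l₂ ∧ (∀ a ∈ l₂, a ∉ (Y : Set A)) ∧
      IsChainFromTo R Y T (b :: l₂) := by
    obtain ⟨a, ha, haY⟩ := (hP.1 i).2.1
    exact (hP.1 i).exists_eq_append_cons_last ⟨a, List.mem_of_mem_head? ha, haY⟩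
  choose pre start suf hP_eq hsuf hchain using hsplit
  have hstart_mem (i : ι) : start i ∈ Y := by simpa using (hchain i).2.1
  have hsub (i : ι) : start i :: suf i ⊆ P i := by simp [hP_eq i]
  have hinj : start.Injective := fun i j h => by
    by_contra hij
    exact hP.2 hij (hsub i (.head _)) (h ▸ hsub j (.head _))
  -- The cut points are distinct, so they exhaust `Y`.
  have himage : Finset.univ.image start = Y :=
    Finset.eq_of_subset_of_card_le (by simpa [Finset.subset_iff] using hstart_mem)
      (by rwa [Finset.card_image_of_injective _ hinj, Finset.card_univ])
  have hsurj (β : A) (hβ : β ∈ Y) : ∃ i, start i = β := by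
    rw [← himage] at hβ
    simpa using hβ
  choose σ hσ using hsurj
  refine ⟨fun β => if hβ : β ∈ Y then suf (σ β hβ) else [], fun β hβ => ?_,
    fun β hβ γ hγ hβγ => ?_⟩
  · rw [Finset.mem_coe] at hβ
    simpa [hβ, hσ β hβ] using And.intro (hchain (σ β hβ)) (hsuf (σ β hβ))
  · rw [Finset.mem_coe] at hβ hγ
    have hne : σ β hβ ≠ σ γ hγ := fun h => hβγ (by rw [← hσ β hβ, ← hσ γ hγ, h])
    have := List.disjoint_of_subset_left (hsub _)
      (List.disjoint_of_subset_right (hsub _) (hP.2 hne))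
    simpa [hβ, hγ, hσ β hβ, hσ γ hγ] using this

theorem IsLinkage.exists_isLinkageOnto {ι : Type*} [Fintype ι] {P : ι → List A} {X : Finset A}
    (hP : IsLinkage R S X P) (hX : X.card ≤ Fintype.card ι) : ∃ f, IsLinkageOnto R S X f := by
  have hP' : IsLinkage (flip R) X S fun i => (P i).reverse :=
    ⟨fun i => isChainFromTo_reverse.mpr (hP.1 i),
      fun i j hij => List.disjoint_reverse_left.mpr (List.disjoint_reverse_right.mpr (hP.2 hij))⟩
  obtain ⟨g, hg⟩ := hP'.exists_isLinkageFrom hX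
  refine ⟨fun α => (g α).reverse, fun α hα => ?_, fun α hα β hβ hαβ => ?_⟩
  · have h := isChainFromTo_reverse.mpr (hg.1 α hα).1
    simp only [List.reverse_cons] at h
    exact ⟨h, by simpa using (hg.1 α hα).2⟩
  · have h : (α :: g α).Disjoint (β :: g β) := hg.2 hα hβ hαβ
    rw [← List.disjoint_reverse_left, ← List.disjoint_reverse_right] at h
    simpa using h

theorem Separates.eq_of_mem_of_mem {f g : List A} {α β w : A} (hC : Separates R S T C)
    (hCX : C ⊆ X) (hCY : C ⊆ Y) (hf : IsChainFromTo R S X (f ++ [α])) (hfX : ∀ a ∈ f, a ∉ X)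
    (hg : IsChainFromTo R Y T (β :: g)) (hgY : ∀ a ∈ g, a ∉ Y)
    (hwf : w ∈ f ++ [α]) (hwg : w ∈ β :: g) : w ∈ C ∧ w = α ∧ w = β := by
  obtain ⟨l₁, l₂, hl⟩ := List.append_of_mem hwf
  obtain ⟨m₁, m₂, hm⟩ := List.append_of_mem hwg
  have hl₁ : l₁ ⊆ f := by
    have : f = l₁ ++ (w :: l₂).dropLast := by
      simpa [List.dropLast_append_cons] using congrArg List.dropLast hl
    rw [this]
    exact List.subset_append_left _ _
  have hm₂ : m₂ ⊆ g := by
    have : g = (m₁ ++ w :: m₂).tail := by rw [← hm]; rfl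
    rcases m₁ with _ | ⟨b, m₁⟩ <;> simp [this]
  -- Splicing the two chains at `w` gives an `S`–`T` chain, and only `w` on it can lie in `C`.
  obtain ⟨c, hc, hcC⟩ := hC _ ((hl ▸ hf).splice (hm ▸ hg))
  have hwC : w ∈ C := by
    rcases List.mem_append.mp hc with hc | hc | ⟨_, hc⟩
    · exact absurd (hCX hcC) (hfX c (hl₁ hc))
    · exact hcC
    · exact absurd (hCY hcC) (hgY c (hm₂ hc))
  refine ⟨hwC, ?_, ?_⟩
  · rcases List.mem_append.mp hwf with h | h
    · exact absurd (hCX hwC) (hfX w h)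
    · simpa using h
  · rcases List.mem_cons.mp hwg with h | h
    · exact h
    · exact absurd (hCY hwC) (hgY w h)

theorem exists_isLinkage_of_isLinkageOnto_of_isLinkageFrom {x y : A} {f g : A → List A}
    (hR₀ : ∀ a b, R₀ a b → R a b) (hxy : R x y) (hC : Separates R₀ S T C) (hxC : x ∉ C)
    (hyC : y ∉ C)
    (hf : IsLinkageOnto R₀ S (insert x C) f) (hg : IsLinkageFrom R₀ (insert y C) T g) :
    ∃ P : Option C → List A, IsLinkage R S T P := by
  let src : Option C → A := fun o => o.elim x (↑)
  let tgt : Option C → A := fun o => o.elim y (↑)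
  have hsrc (o : Option C) : src o ∈ insert x C := by
    rcases o with _ | c <;> simp [src]
  have htgt (o : Option C) : tgt o ∈ insert y C := by
    rcases o with _ | c <;> simp [tgt]
  have hsrc_inj : src.Injective := by
    rintro (_ | ⟨⟨a, ha⟩⟩) (_ | ⟨⟨b, hb⟩⟩) h <;> aesop
  have htgt_inj : tgt.Injective := by
    rintro (_ | ⟨⟨a, ha⟩⟩) (_ | ⟨⟨b, hb⟩⟩) h <;> aesop
  have hsrc_tgt (o o' : Option C) (ho : src o ∈ C) (h : src o = tgt o') : o = o' := by
    rcases o with _ | ⟨⟨a, ha⟩⟩ <;> rcases o' with _ | ⟨⟨b, hb⟩⟩ <;> aesop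
  let P : Option C → List A :=
    fun o => o.elim (f x ++ x :: y :: g y) fun c => f c ++ (c : A) :: g c
  have hP_mem (o : Option C) (w : A) (hw : w ∈ P o) :
      w ∈ f (src o) ++ [src o] ∨ w ∈ tgt o :: g (tgt o) := by
    rcases o with _ | c <;>
      simp only [P, src, tgt, Option.elim, List.mem_append, List.mem_cons] at hw ⊢ <;> tauto
  refine ⟨P, fun o => ?_, fun o o' hoo' w hw hw' => ?_⟩
  · rcases o with _ | ⟨⟨c, hc⟩⟩
    · have := ((hf.1 x (by simp)).1.mono hR₀).append ((hg.1 y (by simp)).1.mono hR₀)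
        (by simpa using hxy)
      simpa [P] using this
    · exact IsChainFromTo.splice (l₂ := []) (m₁ := []) ((hf.1 c (by simp [hc])).1.mono hR₀)
        ((hg.1 c (by simp [hc])).1.mono hR₀)
  have hcross {o o' : Option C} (h : w ∈ f (src o) ++ [src o]) (h' : w ∈ tgt o' :: g (tgt o')) :
      o = o' := by
    obtain ⟨hwC, rfl, hw'⟩ := hC.eq_of_mem_of_mem (Set.subset_insert _ _) (Set.subset_insert _ _)
      (hf.1 _ (hsrc o)).1 (hf.1 _ (hsrc o)).2 (hg.1 _ (htgt o')).1 (hg.1 _ (htgt o')).2 h h'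
    exact hsrc_tgt o o' hwC hw'
  rcases hP_mem o w hw with h₁ | h₁ <;> rcases hP_mem o' w hw' with h₂ | h₂
  · exact hf.2 (hsrc o) (hsrc o') (hsrc_inj.ne hoo') h₁ h₂
  · exact hoo' (hcross h₁ h₂)
  · exact hoo' (hcross h₂ h₁).symm
  · exact hg.2 (htgt o) (htgt o') (htgt_inj.ne hoo') h₁ h₂

theorem exists_isLinkage_of_separates_of_arc {x y : A} {k : ℕ} {C : Finset A}
    (hR : ∀ a b, R a b ↔ R₀ a b ∨ a = x ∧ b = y) (hC : Separates R₀ S T C) (hCk : C.card ≤ k)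
    (H : ∀ C : Finset A, C.card ≤ k → ¬Separates R S T C)
    (IH : ∀ S T : Set A, (∀ C : Finset A, C.card ≤ k → ¬Separates R₀ S T C) →
      ∃ P : Fin (k + 1) → List A, IsLinkage R₀ S T P) :
    ∃ P : Fin (k + 1) → List A, IsLinkage R S T P := by
  classical
  have hsep {z : A} (hz : z = x ∨ z = y) : Separates R S T ↑(insert z C) := by
    rw [Finset.coe_insert]
    exact hC.insert_of_arc (fun a b => (hR a b).1) hz
  have hcard {z : A} (hz : z = x ∨ z = y) : z ∉ C ∧ C.card = k :=
    Finset.notMem_and_card_eq_of_lt_card_insert hCk (not_le.mp fun h => H _ h (hsep hz))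
  obtain ⟨hxC, hCk⟩ := hcard (Or.inl rfl)
  obtain ⟨hyC, -⟩ := hcard (Or.inr rfl)
  have hR₀ a b (h : R₀ a b) : R a b := (hR a b).2 (Or.inl h)
  obtain ⟨F, hF⟩ := IH S ↑(insert x C) fun C' hC' hC'X => H C' hC' <|
    (hsep (Or.inl rfl)).of_separates_to
      (fun a b h ha => ((hR a b).1 h).resolve_right fun h => ha (by simp [h.1])) hC'X
  obtain ⟨B, hB⟩ := IH ↑(insert y C) T fun C' hC' hC'Y => H C' hC' <|
    (hsep (Or.inr rfl)).of_separates_from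
      (fun a b h hb => ((hR a b).1 h).resolve_right fun h => hb (by simp [h.2])) hC'Y
  obtain ⟨f, hf⟩ := hF.exists_isLinkageOnto (by simp [Finset.card_insert_of_notMem hxC, hCk])
  obtain ⟨g, hg⟩ := hB.exists_isLinkageFrom (by simp [Finset.card_insert_of_notMem hyC, hCk])
  rw [Finset.coe_insert] at hf hg
  obtain ⟨P, hP⟩ := exists_isLinkage_of_isLinkageOnto_of_isLinkageFrom hR₀
    ((hR x y).2 (Or.inr ⟨rfl, rfl⟩)) hC hxC hyC hf hg
  have hk : Fintype.card (Fin (k + 1)) = Fintype.card (Option (C : Set A)) := by simp [hCk]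
  exact ⟨P ∘ Fintype.equivOfCardEq hk, hP.comp (Equiv.injective _)⟩

theorem exists_isLinkage_of_forall_not_rel {k : ℕ} (hR : ∀ a b, ¬R a b)
    (H : ∀ C : Finset A, C.card ≤ k → ¬Separates R S T C) :
    ∃ P : Fin (k + 1) → List A, IsLinkage R S T P := by
  classical
  have hST (C : Finset A) (hC : C.card ≤ k) : ∃ a ∈ S ∩ T, a ∉ C := by
    have := H C hC
    simp only [Separates, not_forall, not_exists, not_and] at this
    obtain ⟨l, ⟨hl, ⟨a, ha, haS⟩, ⟨b, hb, hbT⟩⟩, hlC⟩ := this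
    rcases l with _ | ⟨c, _ | ⟨d, l⟩⟩
    · simp at ha
    · obtain rfl : c = a := by simpa using ha
      obtain rfl : c = b := by simpa using hb
      exact ⟨c, ⟨haS, hbT⟩, hlC c (.head _)⟩
    · exact absurd (List.isChain_cons_cons.mp hl).1 (hR c d)
  obtain ⟨D, hDST, hD⟩ : ∃ D : Finset A, ↑D ⊆ S ∩ T ∧ D.card = k + 1 := by
    rcases (S ∩ T).finite_or_infinite with hfin | hinf
    · have hk : k + 1 ≤ hfin.toFinset.card := by
        by_contra h
        obtain ⟨a, ha, haC⟩ := hST hfin.toFinset (by omega)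
        exact haC (by simpa using ha)
      obtain ⟨D, hD, hDk⟩ := Finset.exists_subset_card_eq hk
      exact ⟨D, hfin.subset_toFinset.mp hD, hDk⟩
    · exact hinf.exists_subset_card_eq (k + 1)
  have hP : IsLinkage R S T fun a : D => [(a : A)] :=
    ⟨fun a => ⟨.singleton _, ⟨a, rfl, (hDST a.2).1⟩, ⟨a, rfl, (hDST a.2).2⟩⟩,
      fun a b hab => by simpa using Subtype.coe_injective.ne hab.symm⟩
  have hk : Fintype.card (Fin (k + 1)) = Fintype.card D := by simp [hD]
  exact ⟨_, hP.comp (Fintype.equivOfCardEq hk).injective⟩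

theorem exists_isLinkage_of_forall_not_separates {k : ℕ} (hR : {p : A × A | R p.1 p.2}.Finite)
    (H : ∀ C : Finset A, C.card ≤ k → ¬Separates R S T C) :
    ∃ P : Fin (k + 1) → List A, IsLinkage R S T P := by
  classical
  obtain ⟨E, hE⟩ : ∃ E : Finset (A × A), ∀ a b, R a b ↔ (a, b) ∈ E := ⟨hR.toFinset, by simp⟩
  clear hR
  induction E using Finset.induction_on generalizing R S T with
  | empty => exact exists_isLinkage_of_forall_not_rel (by simpa using hE) H
  | @insert e E _ ih =>
    obtain ⟨x, y⟩ := e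
    have hR a b : R a b ↔ (a, b) ∈ E ∨ a = x ∧ b = y := by simp [hE, or_comm]
    by_cases hsep : ∃ C : Finset A, C.card ≤ k ∧ Separates (fun a b => (a, b) ∈ E) S T C
    · obtain ⟨C, hCk, hC⟩ := hsep
      exact exists_isLinkage_of_separates_of_arc hR hC hCk H fun S T h =>
        ih h fun _ _ => Iff.rfl
    · push Not at hsep
      obtain ⟨P, hP⟩ := ih hsep fun _ _ => Iff.rfl
      exact ⟨P, hP.mono fun a b h => (hR a b).2 (Or.inl h)⟩

end Linkage

theorem pairwise_disjoint_update_update {ι α : Type*} [DecidableEq ι] {W : ι → List α}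
    (hW : Pairwise fun i j => (W i).Disjoint (W j)) {i j : ι} {a b : List α}
    (ha : a ⊆ W i ++ W j) (hb : b ⊆ W i ++ W j) (hab : a.Disjoint b) :
    Pairwise fun l m => (Function.update (Function.update W i a) j b l).Disjoint
      (Function.update (Function.update W i a) j b m) := by
  intro l m hlm x hl hm
  have hW' (p q : ι) (hp : x ∈ W p) (hq : x ∈ W q) : p = q := by_contra fun h => hW h hp hq
  have hab' : x ∈ a → x ∉ b := fun h => hab h
  simp only [Function.update_apply] at hl hm
  split_ifs at hl hm <;> grind

theorem sum_length_update_update {ι α : Type*} [Fintype ι] [DecidableEq ι] (W : ι → List α)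
    {i j : ι} (hij : i ≠ j) (a b : List α) :
    ∑ l, (Function.update (Function.update W i a) j b l).length + (W i).length + (W j).length =
      ∑ l, (W l).length + a.length + b.length := by
  simp only [Function.apply_update (fun _ => List.length)]
  rw [Finset.sum_update_of_mem (Finset.mem_univ j), Finset.sum_update_of_mem (by simpa using hij),
    Finset.sum_eq_add_sum_sdiff_singleton_of_mem (Finset.mem_univ j),
    Finset.sum_eq_add_sum_sdiff_singleton_of_mem (s := Finset.univ \ {j}) (by simpa using hij)]
  ring

namespace LabeledGraph

variable {V : Type} (G : LabeledGraph V)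

-- The dart `(e, b)` runs along `e` in the direction selected by `b` from a fixed ordering of the
-- endpoints of `e`.
noncomputable def dartFst (d : Fin G.m × Bool) : V :=
  if d.2 then (G.ends d.1).out.2 else (G.ends d.1).out.1

noncomputable def dartSnd (d : Fin G.m × Bool) : V :=
  if d.2 then (G.ends d.1).out.1 else (G.ends d.1).out.2

def dartsFrom (u : V) : Set (Fin G.m × Bool) := {d | G.dartFst d = u}

def dartsTo (v : V) : Set (Fin G.m × Bool) := {d | G.dartSnd d = v}

def AscAdj (d d' : Fin G.m × Bool) : Prop :=
  G.dartSnd d = G.dartFst d' ∧ G.label d.1 < G.label d'.1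

variable {G}

theorem ends_eq_dart (d : Fin G.m × Bool) : G.ends d.1 = s(G.dartFst d, G.dartSnd d) := by
  obtain ⟨e, b⟩ := d
  have h : G.ends e = s((G.ends e).out.1, (G.ends e).out.2) := (Quot.out_eq _).symm
  cases b
  · exact h
  · exact h.trans Sym2.eq_swap

theorem exists_dart {e : Fin G.m} {u w : V} (h : G.ends e = s(u, w)) :
    ∃ b, G.dartFst (e, b) = u ∧ G.dartSnd (e, b) = w := by
  have h' : s((G.ends e).out.1, (G.ends e).out.2) = s(u, w) := (Quot.out_eq _).trans h
  rcases Sym2.eq_iff.mp h' with ⟨h₁, h₂⟩ | ⟨h₁, h₂⟩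
  · exact ⟨false, by simpa [dartFst, dartSnd] using And.intro h₁ h₂⟩
  · exact ⟨true, by simpa [dartFst, dartSnd] using And.intro h₂ h₁⟩

theorem dartSnd_not (e : Fin G.m) (b : Bool) : G.dartSnd (e, !b) = G.dartFst (e, b) := by
  cases b <;> simp [dartFst, dartSnd]

theorem isWalk_of_isChain_ascAdj {l : List (Fin G.m × Bool)} (hl : l.IsChain G.AscAdj) :
    ∀ {d d'}, d ∈ l.head? → d' ∈ l.getLast? →
      G.IsWalk (G.dartFst d) (G.dartSnd d') (l.map Prod.fst) := by
  induction hl with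
  | nil => simp
  | singleton a =>
    intro d d' hd hd'
    obtain rfl : a = d := by simpa using hd
    obtain rfl : a = d' := by simpa using hd'
    exact .cons (ends_eq_dart a) (.nil _)
  | @cons_cons a b l hab _ ih =>
    intro d d' hd hd'
    obtain rfl : a = d := by simpa using hd
    exact .cons (ends_eq_dart a) (hab.1 ▸ ih rfl (by rwa [List.getLast?_cons_cons] at hd'))

theorem isAscPath_map_fst {u v : V} {l : List (Fin G.m × Bool)}
    (hl : IsChainFromTo G.AscAdj (G.dartsFrom u) (G.dartsTo v) l) :
    G.IsAscPath u v (l.map Prod.fst) := by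
  obtain ⟨hc, ⟨d, hd, rfl⟩, ⟨d', hd', rfl⟩⟩ := hl
  refine ⟨isWalk_of_isChain_ascAdj hc hd hd', ?_⟩
  rw [List.map_map]
  exact (List.isChain_map _).mpr (hc.imp fun _ _ h => h.2)

theorem IsAscPath.exists_isChainFromTo {u v : V} {es : List (Fin G.m)} (h : G.IsAscPath u v es)
    (hes : es ≠ []) :
    ∃ l, l.map Prod.fst = es ∧ IsChainFromTo G.AscAdj (G.dartsFrom u) (G.dartsTo v) l := by
  obtain ⟨hw, hlab⟩ := h
  induction hw with
  | nil => exact absurd rfl hes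
  | @cons u w v e es hends hw ih =>
    obtain ⟨b, hbu, hbw⟩ := exists_dart hends
    by_cases hes' : es = []
    · subst hes'
      cases hw
      exact ⟨[(e, b)], rfl, .singleton _, ⟨_, rfl, hbu⟩, ⟨_, rfl, hbw⟩⟩
    · obtain ⟨l, rfl, hl, ⟨d, hd, hdw⟩, ⟨d', hd', hd'v⟩⟩ := ih hes' hlab.tail
      refine ⟨(e, b) :: l, rfl, List.isChain_cons.mpr ⟨fun d₁ hd₁ => ?_, hl⟩, ⟨_, rfl, hbu⟩,
        ⟨d', ?_, hd'v⟩⟩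
      · obtain rfl : d₁ = d := Option.mem_unique hd₁ hd
        exact ⟨hbw.trans hdw.symm, (List.isChain_cons.mp hlab).1 _ (by simp_all [List.head?_map])⟩
      · simp_all [List.getLast?_cons]

theorem nodup_of_isChain_ascAdj {l : List (Fin G.m × Bool)} (hl : l.IsChain G.AscAdj) :
    l.Nodup := by
  have h : (l.map fun d => G.label d.1).IsChain (· < ·) :=
    (List.isChain_map _).mpr (hl.imp fun _ _ h => h.2)
  exact List.Nodup.of_map _ ((List.isChain_iff_pairwise.mp h).imp ne_of_lt)

theorem isChainFromTo_append_of_reverse_darts {u v : V} (huv : u ≠ v)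
    {P₁ P₂ Q₁ Q₂ : List (Fin G.m × Bool)} {e : Fin G.m} {b : Bool}
    (hP : IsChainFromTo G.AscAdj (G.dartsFrom u) (G.dartsTo v) (P₁ ++ (e, b) :: P₂))
    (hQ : IsChainFromTo G.AscAdj (G.dartsFrom u) (G.dartsTo v) (Q₁ ++ (e, !b) :: Q₂)) :
    IsChainFromTo G.AscAdj (G.dartsFrom u) (G.dartsTo v) (P₁ ++ Q₂) := by
  obtain ⟨hPc, ⟨p₀, hp₀, hp₀u⟩, -⟩ := hP
  obtain ⟨hQc, -, ⟨q₀, hq₀, hq₀v⟩⟩ := hQ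
  have hP₁ : ∀ p ∈ P₁.getLast?, G.AscAdj p (e, b) := fun p hp =>
    (List.isChain_append.mp (List.isChain_split.mp hPc).1).2.2 p hp _ rfl
  have hQ₂ : ∀ q ∈ Q₂.head?, G.AscAdj (e, !b) q :=
    (List.isChain_cons.mp (List.isChain_split.mp hQc).2).1
  have hsnd : G.dartSnd (e, !b) = G.dartFst (e, b) := dartSnd_not e b
  have hP₁_nil (h : P₁ = []) : G.dartFst (e, b) = u := by
    subst h
    simp only [List.nil_append, List.head?_cons, Option.mem_def, Option.some.injEq] at hp₀
    exact hp₀ ▸ hp₀u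
  have hQ₂_nil (h : Q₂ = []) : G.dartFst (e, b) = v := by
    subst h
    simp only [List.getLast?_append, List.getLast?_singleton, Option.some_or, Option.mem_def,
      Option.some.injEq] at hq₀
    exact hsnd.symm.trans (hq₀ ▸ hq₀v)
  refine ⟨List.isChain_append.mpr ⟨(List.isChain_append.mp (List.isChain_split.mp hPc).1).1,
    (List.isChain_split.mp hQc).2.tail, fun p hp q hq =>
      ⟨(hP₁ p hp).1.trans (hsnd.symm.trans (hQ₂ q hq).1), (hP₁ p hp).2.trans (hQ₂ q hq).2⟩⟩,
    ?_, ?_⟩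
  · rcases P₁ with _ | ⟨p, P₁⟩
    · rcases Q₂ with _ | ⟨q, Q₂⟩
      · exact absurd ((hP₁_nil rfl).symm.trans (hQ₂_nil rfl)) huv
      · exact ⟨q, rfl, ((hQ₂ q rfl).1.symm.trans hsnd).trans (hP₁_nil rfl)⟩
    · exact ⟨p₀, by simpa using hp₀, hp₀u⟩
  · rcases hq : Q₂.getLast? with _ | q
    · obtain rfl := List.getLast?_eq_none_iff.mp hq
      obtain ⟨p, hp⟩ : ∃ p, P₁.getLast? = some p := by
        rcases hp : P₁.getLast? with _ | p
        · exact absurd ((hP₁_nil (List.getLast?_eq_none_iff.mp hp)).symm.trans (hQ₂_nil rfl)) huv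
        · exact ⟨p, rfl⟩
      exact ⟨p, by simpa using hp, (hP₁ p hp).1.trans (hQ₂_nil rfl)⟩
    · exact ⟨q₀, by simpa [List.getLast?_cons, hq] using hq₀, hq₀v⟩

theorem IsLinkage.exists_sum_length_lt {ι : Type*} [Fintype ι] [DecidableEq ι] {u v : V}
    (huv : u ≠ v) {W : ι → List (Fin G.m × Bool)}
    (hW : IsLinkage G.AscAdj (G.dartsFrom u) (G.dartsTo v) W) {i j : ι} (hij : i ≠ j)
    {e : Fin G.m} {b : Bool} (hi : (e, b) ∈ W i) (hj : (e, !b) ∈ W j) :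
    ∃ W' : ι → List (Fin G.m × Bool), IsLinkage G.AscAdj (G.dartsFrom u) (G.dartsTo v) W' ∧
      ∑ l, (W' l).length < ∑ l, (W l).length := by
  obtain ⟨P₁, P₂, hP⟩ := List.append_of_mem hi
  obtain ⟨Q₁, Q₂, hQ⟩ := List.append_of_mem hj
  have hPc := hW.1 i
  have hQc := hW.1 j
  rw [hP] at hPc
  rw [hQ] at hQc
  have hPQ : (P₁ ++ Q₂).Disjoint (Q₁ ++ P₂) := by
    have hPnd := List.nodup_append.mp (nodup_of_isChain_ascAdj hPc.1)
    have hQnd := List.nodup_append.mp (nodup_of_isChain_ascAdj hQc.1)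
    have hWij : (W i).Disjoint (W j) := hW.2 hij
    rw [hP, hQ] at hWij
    intro x hx hx'
    simp only [List.mem_append] at hx hx'
    rcases hx with hx | hx <;> rcases hx' with hx' | hx'
    · exact hWij (List.mem_append_left _ hx) (List.mem_append_left _ hx')
    · exact hPnd.2.2 x hx x (.tail _ hx') rfl
    · exact hQnd.2.2 x hx' x (.tail _ hx) rfl
    · exact hWij (List.mem_append_right _ (.tail _ hx')) (List.mem_append_right _ (.tail _ hx))
  refine ⟨Function.update (Function.update W i (P₁ ++ Q₂)) j (Q₁ ++ P₂),
    ⟨fun l => ?_, pairwise_disjoint_update_update hW.2 ?_ ?_ hPQ⟩, ?_⟩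
  · simp only [Function.update_apply]
    split_ifs
    · exact isChainFromTo_append_of_reverse_darts huv (b := !b) hQc (by simpa using hPc)
    · exact isChainFromTo_append_of_reverse_darts huv hPc hQc
    · exact hW.1 l
  · intro x hx
    simp only [hP, hQ, List.mem_append, List.mem_cons] at hx ⊢
    tauto
  · intro x hx
    simp only [hP, hQ, List.mem_append, List.mem_cons] at hx ⊢
    tauto
  · have := sum_length_update_update W hij (P₁ ++ Q₂) (Q₁ ++ P₂)
    simp only [hP, hQ, List.length_append, List.length_cons] at this
    omega

theorem IsLinkage.exists_edge_disjoint {ι : Type*} [Fintype ι] {u v : V} (huv : u ≠ v)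
    {W : ι → List (Fin G.m × Bool)} (hW : IsLinkage G.AscAdj (G.dartsFrom u) (G.dartsTo v) W) :
    ∃ P : ι → List (Fin G.m),
      (∀ i, G.IsAscPath u v (P i)) ∧ Pairwise fun i j => (P i).Disjoint (P j) := by
  classical
  induction hn : ∑ i, (W i).length using Nat.strong_induction_on generalizing W with
  | _ n ih =>
  by_cases hdisj : Pairwise fun i j => ((W i).map Prod.fst).Disjoint ((W j).map Prod.fst)
  · exact ⟨_, fun i => isAscPath_map_fst (hW.1 i), hdisj⟩
  obtain ⟨i, j, hij, e, hei, hej⟩ : ∃ i j, i ≠ j ∧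
      ∃ e, e ∈ (W i).map Prod.fst ∧ e ∈ (W j).map Prod.fst := by
    simp only [Pairwise, List.Disjoint, not_forall] at hdisj
    obtain ⟨i, j, hij, e, hei, hej, -⟩ := hdisj
    exact ⟨i, j, hij, e, hei, hej⟩
  obtain ⟨⟨e, b⟩, hi, rfl⟩ := List.mem_map.mp hei
  obtain ⟨⟨e', b'⟩, hj, rfl : e' = e⟩ := List.mem_map.mp hej
  -- The two chains are dart-disjoint, so they run along `e` in opposite directions.
  obtain rfl : b' = !b := by
    cases b <;> cases b' <;> first | rfl | exact absurd hj (hW.2 hij hi)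
  obtain ⟨W', hW', hlt⟩ := IsLinkage.exists_sum_length_lt huv hW hij hi hj
  exact ih _ (hn ▸ hlt) hW' rfl

theorem IsFaultTolerant.not_separates {k : ℕ} (h : G.IsFaultTolerant k) {u v : V} (huv : u ≠ v)
    {C : Finset (Fin G.m × Bool)} (hC : C.card ≤ k) :
    ¬Separates G.AscAdj (G.dartsFrom u) (G.dartsTo v) C := by
  classical
  intro hsep
  obtain ⟨es, hes, hF⟩ := h (C.image Prod.fst) (Finset.card_image_le.trans hC) u v
  have hes_ne : es ≠ [] := by
    rintro rfl
    cases hes.1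
    exact huv rfl
  obtain ⟨l, rfl, hl⟩ := hes.exists_isChainFromTo hes_ne
  obtain ⟨d, hd, hdC⟩ := hsep l hl
  exact hF d.1 (List.mem_map_of_mem hd) (Finset.mem_image_of_mem _ hdC)

end LabeledGraph

theorem exists_forall_notMem_of_card_lt {ι α : Type*} [Fintype ι] {P : ι → List α}
    (hP : Pairwise fun i j => (P i).Disjoint (P j)) {F : Finset α}
    (hF : F.card < Fintype.card ι) : ∃ i, ∀ e ∈ P i, e ∉ F := by
  by_contra! h
  choose g hgP hgF using h
  obtain ⟨i, -, j, -, hij, hg⟩ := Finset.exists_ne_map_eq_of_card_lt_of_maps_to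
    (s := Finset.univ) (t := F) (by simpa using hF) fun i _ => hgF i
  exact hP hij (hgP i) (hg ▸ hgP j)

open LabeledGraph in
/-- `G` is a `k`-fault-tolerant gossip graph iff between every ordered
pair of distinct vertices there are at least `k+1` pairwise edge-disjoint ascending
paths. -/
theorem faultTolerant_iff_edge_disjoint_ascending_paths
    {V : Type} (G : LabeledGraph V) (k : ℕ) :
    G.IsFaultTolerant k ↔
      ∀ u v : V, u ≠ v →
        ∃ P : Fin (k + 1) → List (Fin G.m),
          (∀ i, G.IsAscPath u v (P i)) ∧
          (∀ i j, i ≠ j → List.Disjoint (P i) (P j)) := by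
  constructor
  · intro hft u v huv
    obtain ⟨W, hW⟩ := exists_isLinkage_of_forall_not_separates (Set.toFinite _)
      fun C hC => hft.not_separates huv hC
    exact hW.exists_edge_disjoint huv
  · intro hP F hF u v
    rcases eq_or_ne u v with rfl | huv
    · exact ⟨[], ⟨.nil u, .nil⟩, by simp⟩
    · obtain ⟨P, hPasc, hPdisj⟩ := hP u v huv
      obtain ⟨i, hi⟩ := exists_forall_notMem_of_card_lt hPdisj (by simpa [Nat.lt_succ_iff])
      exact ⟨P i, hPasc i, hi⟩
end

section
/- If G is a labeled graph with n vertices and m edges such that between every ordered pair of vertices there are p edge-disjoint s-folded ascending paths, then τ(n,k) ≤ (s + ⌈(k+1)/p⌉)·m, where τ(n,k) is the minimum number of edges in a k-fault-tolerant gossip graph on n vertices. -/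
theorem exists_forall_notMem_of_pairwise_disjoint {ι α : Type*} [Fintype ι] {L : ι → List α}
    (hL : Pairwise fun i j => (L i).Disjoint (L j)) (F : Finset α)
    (hF : F.card < Fintype.card ι) : ∃ i, ∀ x ∈ L i, x ∉ F := by
  by_contra! h
  choose f hfL hfF using h
  have hinj : Function.Injective fun i => (⟨f i, hfF i⟩ : F) := by
    intro i j hij
    by_contra hne
    have hfij : f i = f j := congrArg Subtype.val hij
    exact hL hne (hfL i) (hfij ▸ hfL j)
  exact hF.not_ge (by simpa using Fintype.card_le_of_injective _ hinj)

namespace LabeledGraph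

variable {V : Type}

theorem IsWalk.of_map {G H : LabeledGraph V} (f : Fin H.m → Fin G.m)
    (hf : ∀ x, G.ends (f x) = H.ends x) {u v : V} {L : List (Fin H.m)}
    (hw : G.IsWalk u v (L.map f)) : H.IsWalk u v L := by
  induction L generalizing u with
  | nil => cases hw; exact .nil v
  | cons x L ih =>
    cases hw with
    | cons hx hL => exact .cons (hf x ▸ hx) (ih hL)

def shiftedLabel (G : LabeledGraph V) (x : ℕ × Fin G.m) : ℕ :=
  G.label x.2 + x.1 * (G.maxLabel + 1)

/-- Unlike `hCopy`, consecutive copies are shifted by `maxLabel G + 1`, so that every label of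
copy `c + 1` exceeds every label of copy `c` even when `G` has edges labeled `0`. -/
def shiftedCopies (G : LabeledGraph V) (h : ℕ) : LabeledGraph V where
  m := h * G.m
  ends x := G.ends (finProdFinEquiv.symm x).2
  label x := G.shiftedLabel ((finProdFinEquiv.symm x).1, (finProdFinEquiv.symm x).2)

def copyOf {G : LabeledGraph V} {h : ℕ} (x : Fin (G.shiftedCopies h).m) : ℕ × Fin G.m :=
  ((finProdFinEquiv.symm x).1, (finProdFinEquiv.symm x).2)

theorem shiftedCopies_ends {G : LabeledGraph V} {h : ℕ} (x : Fin (G.shiftedCopies h).m) :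
    (G.shiftedCopies h).ends x = G.ends (copyOf x).2 := rfl

def toCopy {G : LabeledGraph V} {h : ℕ} (c : Fin h) (e : Fin G.m) : Fin (G.shiftedCopies h).m :=
  finProdFinEquiv (c, e)

theorem copyOf_toCopy {G : LabeledGraph V} {h : ℕ} (c : Fin h) (e : Fin G.m) :
    copyOf (toCopy c e) = (c.val, e) := by
  unfold copyOf toCopy
  rw [Equiv.symm_apply_apply]

theorem exists_map_copyOf_eq {G : LabeledGraph V} {h : ℕ} (l : List (ℕ × Fin G.m))
    (hl : ∀ y ∈ l, y.1 < h) : ∃ L : List (Fin (G.shiftedCopies h).m), L.map copyOf = l := by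
  induction l with
  | nil => exact ⟨[], rfl⟩
  | cons y l ih =>
    obtain ⟨L, hL⟩ := ih fun z hz => hl z (List.mem_cons_of_mem y hz)
    exact ⟨toCopy ⟨y.1, hl y List.mem_cons_self⟩ y.2 :: L,
      by rw [List.map_cons, hL, copyOf_toCopy]⟩

def liftCopies (G : LabeledGraph V) : ℕ → List (Fin G.m) → List (ℕ × Fin G.m)
  | _, [] => []
  | c, [e] => [(c, e)]
  | c, e :: e' :: rest =>
      (c, e) :: G.liftCopies (if G.label e' ≤ G.label e then c + 1 else c) (e' :: rest)

variable (G : LabeledGraph V)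

theorem exists_liftCopies_cons_eq (c : ℕ) (e : Fin G.m) (es : List (Fin G.m)) :
    ∃ l, G.liftCopies c (e :: es) = (c, e) :: l := by
  cases es <;> exact ⟨_, by rw [liftCopies]⟩

theorem map_snd_liftCopies (c : ℕ) (es : List (Fin G.m)) :
    (G.liftCopies c es).map Prod.snd = es := by
  fun_induction liftCopies G c es <;> simp_all

theorem liftCopies_add (c d : ℕ) (es : List (Fin G.m)) :
    G.liftCopies (c + d) es = (G.liftCopies c es).map (Prod.map (· + d) id) := by
  fun_induction liftCopies G c es with
  | case1 => simp [liftCopies]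
  | case2 => simp [liftCopies]
  | case3 c e e' rest ih =>
    have hif : (if G.label e' ≤ G.label e then c + d + 1 else c + d)
        = (if G.label e' ≤ G.label e then c + 1 else c) + d := by
      split_ifs <;> omega
    rw [liftCopies, hif, ih]
    rfl

theorem fst_le_of_mem_liftCopies {c : ℕ} {es : List (Fin G.m)} {x : ℕ × Fin G.m}
    (hx : x ∈ G.liftCopies c es) : x.1 ≤ c + descents (es.map G.label) := by
  fun_induction liftCopies G c es with
  | case1 => simp at hx
  | case2 => simp_all
  | case3 c e e' rest ih =>
    simp only [List.mem_cons] at hx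
    simp only [List.map_cons, descents]
    rcases hx with rfl | hx
    · omega
    · have := ih hx
      split_ifs at this ⊢ <;> simp only [List.map_cons] at this <;> omega

theorem isChain_shiftedLabel_liftCopies (c : ℕ) (es : List (Fin G.m)) :
    ((G.liftCopies c es).map G.shiftedLabel).IsChain (· < ·) := by
  fun_induction liftCopies G c es with
  | case1 => simp
  | case2 => simp
  | case3 c e e' rest ih =>
    have hle : G.label e ≤ G.maxLabel := Finset.le_sup (Finset.mem_univ e)
    obtain ⟨l, hl⟩ :=
      G.exists_liftCopies_cons_eq (if G.label e' ≤ G.label e then c + 1 else c) e' rest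
    rw [hl] at ih ⊢
    refine List.isChain_cons_cons.mpr ⟨?_, ih⟩
    simp only [shiftedLabel]
    split_ifs <;> nlinarith

theorem disjoint_liftCopies_of_ne {es : List (Fin G.m)} (hes : es.Nodup) {c c' : ℕ}
    (hc : c ≠ c') : (G.liftCopies c es).Disjoint (G.liftCopies c' es) := by
  intro x hx hx'
  rw [← zero_add c, liftCopies_add] at hx
  rw [← zero_add c', liftCopies_add] at hx'
  obtain ⟨a, ha, rfl⟩ := List.mem_map.mp hx
  obtain ⟨b, hb, hab⟩ := List.mem_map.mp hx'
  have hnd : ((G.liftCopies 0 es).map Prod.snd).Nodup := by rwa [map_snd_liftCopies]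
  have := List.inj_on_of_nodup_map hnd ha hb (congrArg Prod.snd hab).symm
  subst this
  exact hc (by simpa using (congrArg Prod.fst hab).symm)

theorem disjoint_liftCopies {es es' : List (Fin G.m)} (hd : es.Disjoint es') (c c' : ℕ) :
    (G.liftCopies c es).Disjoint (G.liftCopies c' es') :=
  List.Disjoint.of_map (f := Prod.snd) (by rwa [map_snd_liftCopies, map_snd_liftCopies])

theorem exists_isAscPath_shiftedCopies {h c : ℕ} {u v : V} {es : List (Fin G.m)}
    (hw : G.IsWalk u v es) (hc : c + descents (es.map G.label) < h) :
    ∃ L, (G.shiftedCopies h).IsAscPath u v L ∧ L.map copyOf = G.liftCopies c es := by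
  obtain ⟨L, hL⟩ := exists_map_copyOf_eq (h := h) (G.liftCopies c es)
    fun y hy => (G.fst_le_of_mem_liftCopies hy).trans_lt hc
  have hsnd : L.map (fun x => (copyOf x).2) = es := by
    rw [← G.map_snd_liftCopies c es, ← hL, List.map_map]
    rfl
  refine ⟨L, ⟨IsWalk.of_map (fun x => (copyOf x).2)
    (fun x => (shiftedCopies_ends x).symm) (hsnd ▸ hw), ?_⟩, hL⟩
  have := G.isChain_shiftedLabel_liftCopies c es
  rwa [← hL, List.map_map] at this

theorem isFaultTolerant_shiftedCopies {k s p q : ℕ}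
    (hall : ∀ u v : V, ∃ P : Fin p → List (Fin G.m),
      (∀ i, G.IsFoldedPath u v (P i) s) ∧ (∀ i j, i ≠ j → List.Disjoint (P i) (P j)))
    (hk : k < q * p) : (G.shiftedCopies (s + q)).IsFaultTolerant k := by
  intro F hF u v
  obtain ⟨P, hP, hPd⟩ := hall u v
  have hlift (ij : Fin p × Fin q) := G.exists_isAscPath_shiftedCopies (h := s + q) (c := ij.2)
    (hP ij.1).1 (by rw [(hP ij.1).2.2]; omega)
  choose L hL hLc using hlift
  have hdisj : Pairwise fun a b => (L a).Disjoint (L b) := by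
    rintro ⟨i, j⟩ ⟨i', j'⟩ hne
    refine List.Disjoint.of_map (f := copyOf) ?_
    rw [hLc, hLc]
    by_cases hi : i = i'
    · subst hi
      exact G.disjoint_liftCopies_of_ne (hP i).2.1 (by simpa [Fin.val_inj] using hne)
    · exact G.disjoint_liftCopies (hPd i i' hi) _ _
  obtain ⟨ij, hij⟩ := exists_forall_notMem_of_pairwise_disjoint hdisj F
    (by simp only [Fintype.card_prod, Fintype.card_fin]; linarith)
  exact ⟨L ij, hL ij, hij⟩

end LabeledGraph

open LabeledGraph in
/-- If `G` is a labeled graph on `n` vertices with `m` edges such that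
between every ordered pair of vertices there are `p` edge-disjoint `s`-folded
ascending paths, then `τ(n,k) ≤ (s + ⌈(k+1)/p⌉)·m`. -/
theorem tau_le_of_folded_paths (n m k s p : ℕ) (hp : 0 < p)
    (G : LabeledGraph (Fin n)) (hm : G.m = m)
    (hall : ∀ u v : Fin n, ∃ P : Fin p → List (Fin G.m),
      (∀ i, G.IsFoldedPath u v (P i) s) ∧
      (∀ i j, i ≠ j → List.Disjoint (P i) (P j))) :
    tau n k ≤ (s + (k + 1 + p - 1) / p) * m := by
  have hk : k < (k + 1 + p - 1) / p * p := by
    have := Nat.lt_div_mul_add (a := k + 1 + p - 1) hp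
    omega
  subst hm
  exact Nat.sInf_le ⟨G.shiftedCopies _, rfl, G.isFaultTolerant_shiftedCopies hall hk⟩
end

section
/- If n is a power of 2, then the Knödel graph W_{log₂ n, n} with its canonical edge labeling is a gossip graph: for every ordered pair of vertices (u,v) there is an ascending path (labels strictly increasing) from u to v. -/
theorem List.alternatingSum_map_mul_left {R : Type*} [CommRing R] (c : R) (L : List R) :
    (L.map (c * ·)).alternatingSum = c * L.alternatingSum := by
  induction L with
  | nil => simp
  | cons a L ih => simp [ih, mul_sub]

open Fin.CommRing in
theorem Fin.exists_mem_Ioc_intCast_eq {h : ℕ} [NeZero h] (c : ℤ) (r : Fin h) :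
    ∃ t ∈ Set.Ioc c (c + h), (t : Fin h) = r := by
  have hpos : (0 : ℤ) < h := by have := NeZero.pos h; omega
  set x : ℤ := r.val - (c + 1)
  refine ⟨c + 1 + x % h, ⟨by have := Int.emod_nonneg x hpos.ne'; omega,
    by have := Int.emod_lt_of_pos x hpos; omega⟩, ?_⟩
  rw [Int.emod_def]
  push_cast
  simp [x]

theorem exists_isChain_alternatingSum_two_pow_eq (n : ℕ) (t : ℤ) (hlo : -2 ^ n < t)
    (hhi : t ≤ 2 ^ n) :
    ∃ L : List ℕ, L.IsChain (· < ·) ∧ (∀ l ∈ L, l ≤ n) ∧ (Even L.length ↔ t ≤ 0) ∧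
      (L.map ((2 : ℤ) ^ ·)).alternatingSum = t := by
  induction n generalizing t with
  | zero =>
    obtain rfl | rfl : t = 0 ∨ t = 1 := by simp only [pow_zero] at hlo hhi; omega
    · exact ⟨[], by simp⟩
    · exact ⟨[0], by simp⟩
  | succ n ih =>
    rw [pow_succ] at hlo hhi
    have hshift (L : List ℕ) : ((L.map (· + 1)).map ((2 : ℤ) ^ ·)).alternatingSum =
        2 * (L.map ((2 : ℤ) ^ ·)).alternatingSum := by
      simp [← List.alternatingSum_map_mul_left, Function.comp_def, pow_succ']
    have hshift_chain {L : List ℕ} (hL : L.IsChain (· < ·)) : (L.map (· + 1)).IsChain (· < ·) :=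
      List.isChain_map _ |>.mpr (hL.imp fun _ _ h => by omega)
    obtain ⟨q, rfl | rfl⟩ := Int.even_or_odd' t
    · obtain ⟨L, hchain, hle, hpar, hsum⟩ := ih q (by omega) (by omega)
      refine ⟨L.map (· + 1), hshift_chain hchain, by simpa using hle,
        by simpa [hpar] using by omega, ?_⟩
      rw [hshift, hsum]
    · obtain ⟨L, hchain, hle, hpar, hsum⟩ := ih (-q) (by omega) (by omega)
      refine ⟨0 :: L.map (· + 1), List.isChain_cons.mpr ⟨by simp, hshift_chain hchain⟩,
        by simpa using hle, ?_, ?_⟩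
      · simp only [List.length_cons, List.length_map, Nat.even_add_one, hpar]
        omega
      · rw [List.map_cons, List.alternatingSum_cons, hshift, hsum]
        ring

namespace LabeledGraph

def knodelDisplacement (L : List ℕ) : ℤ :=
  (L.map fun l : ℕ => (2 : ℤ) ^ l - 1).alternatingSum

@[simp]
lemma knodelDisplacement_nil : knodelDisplacement [] = 0 := rfl

lemma knodelDisplacement_cons (l : ℕ) (L : List ℕ) :
    knodelDisplacement (l :: L) = 2 ^ l - 1 - knodelDisplacement L := by
  simp [knodelDisplacement]

lemma knodelDisplacement_eq_alternatingSum_sub (L : List ℕ) :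
    knodelDisplacement L =
      (L.map ((2 : ℤ) ^ ·)).alternatingSum - if Even L.length then 0 else 1 := by
  induction L with
  | nil => simp
  | cons l L ih =>
    rw [knodelDisplacement_cons, ih]
    by_cases hL : Even L.length <;> simp [hL, Nat.even_add_one]
    ring

open Fin.CommRing

variable {Δ h : ℕ} [NeZero h]

lemma knodel_exists_edge {l : ℕ} (hl : l < Δ) (j : Fin h) :
    ∃ e : Fin (knodel Δ h).m, (knodel Δ h).label e = l + 1 ∧
      (knodel Δ h).ends e = s((0, j), (1, j + (2 ^ l - 1))) := by
  have hdiv : (l * h + j) / h = l := by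
    rw [mul_comm, Nat.mul_add_div (NeZero.pos h), Nat.div_eq_of_lt j.isLt, add_zero]
  have hmod : (l * h + j) % h = j := by
    rw [mul_comm, Nat.mul_add_mod, Nat.mod_eq_of_lt j.isLt]
  have hlt : l * h + j < Δ * h := by nlinarith [j.isLt]
  refine ⟨⟨l * h + j, hlt⟩, by simp [knodel, hdiv], ?_⟩
  simp only [knodel, hdiv, hmod]
  congr 2
  rw [show (2 ^ l - 1 : Fin h) = ((2 ^ l - 1 : ℕ) : Fin h) by
    rw [Nat.cast_sub Nat.one_le_two_pow]; push_cast; rfl]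
  ext
  simp only [Fin.val_add]
  exact (Nat.add_mod_mod _ _ _).symm

lemma knodel_exists_walk {L : List ℕ} (hL : ∀ l ∈ L, l < Δ) (j : Fin h) :
    (∃ es, (knodel Δ h).IsWalk (0, j)
        (if Even L.length then 0 else 1, j + knodelDisplacement L) es ∧
      es.map (knodel Δ h).label = L.map (· + 1)) ∧
    (∃ es, (knodel Δ h).IsWalk (1, j)
        (if Even L.length then 1 else 0, j - knodelDisplacement L) es ∧
      es.map (knodel Δ h).label = L.map (· + 1)) := by
  induction L generalizing j with
  | nil => exact ⟨⟨[], by simpa using IsWalk.nil _, rfl⟩, ⟨[], by simpa using IsWalk.nil _, rfl⟩⟩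
  | cons l L ih =>
    have hl : l < Δ := hL l List.mem_cons_self
    have hL' : ∀ l ∈ L, l < Δ := fun l' hl' => hL l' (List.mem_cons_of_mem l hl')
    constructor
    · obtain ⟨e, he, hends⟩ := knodel_exists_edge hl j
      obtain ⟨es, hw, hes⟩ := (ih hL' (j + (2 ^ l - 1))).2
      refine ⟨e :: es, ?_, by simp [he, hes]⟩
      refine IsWalk.cons hends ?_
      convert hw using 2
      · simp only [List.length_cons, Nat.even_add_one, ite_not]
      · rw [knodelDisplacement_cons]
        push_cast
        ring
    · obtain ⟨e, he, hends⟩ := knodel_exists_edge hl (j - (2 ^ l - 1))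
      obtain ⟨es, hw, hes⟩ := (ih hL' (j - (2 ^ l - 1))).1
      refine ⟨e :: es, ?_, by simp [he, hes]⟩
      refine IsWalk.cons (by rw [hends, sub_add_cancel, Sym2.eq_swap]) ?_
      convert hw using 2
      · simp only [List.length_cons, Nat.even_add_one, ite_not]
      · rw [knodelDisplacement_cons]
        push_cast
        ring

lemma exists_isChain_knodelDisplacement_cast_eq (n : ℕ) (P : Prop) (r : Fin (2 ^ n)) :
    ∃ L : List ℕ, L.IsChain (· < ·) ∧ (∀ l ∈ L, l ≤ n) ∧ (Even L.length ↔ P) ∧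
      (knodelDisplacement L : Fin (2 ^ n)) = r := by
  by_cases hP : P
  · obtain ⟨t, ⟨hlo, hhi⟩, ht⟩ := Fin.exists_mem_Ioc_intCast_eq (-2 ^ n) r
    push_cast at hhi
    obtain ⟨L, hchain, hle, hpar, hsum⟩ :=
      exists_isChain_alternatingSum_two_pow_eq n t hlo (by omega)
    have hle0 : t ≤ 0 := by omega
    refine ⟨L, hchain, hle, by simpa [hP] using hpar.mpr hle0, ?_⟩
    rw [knodelDisplacement_eq_alternatingSum_sub, hsum, if_pos (hpar.mpr hle0), sub_zero, ht]
  · obtain ⟨t, ⟨hlo, hhi⟩, ht⟩ := Fin.exists_mem_Ioc_intCast_eq 0 (r + 1)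
    push_cast at hhi
    obtain ⟨L, hchain, hle, hpar, hsum⟩ :=
      exists_isChain_alternatingSum_two_pow_eq n t (by omega) (by simpa using hhi)
    have hodd : ¬ Even L.length := by rw [hpar]; omega
    refine ⟨L, hchain, hle, by simp [hP, hodd], ?_⟩
    rw [knodelDisplacement_eq_alternatingSum_sub, hsum, if_neg hodd]
    push_cast
    rw [ht, add_sub_cancel_right]

lemma knodel_exists_isAscPath {L : List ℕ} (hchain : L.IsChain (· < ·)) (hL : ∀ l ∈ L, l < Δ)
    (j : Fin h) :
    (∃ es, (knodel Δ h).IsAscPath (0, j)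
      (if Even L.length then 0 else 1, j + knodelDisplacement L) es) ∧
    (∃ es, (knodel Δ h).IsAscPath (1, j)
      (if Even L.length then 1 else 0, j - knodelDisplacement L) es) := by
  have hasc {es : List (Fin (knodel Δ h).m)} (hes : es.map (knodel Δ h).label = L.map (· + 1)) :
      (es.map (knodel Δ h).label).IsChain (· < ·) := by
    rw [hes]
    exact List.isChain_map _ |>.mpr (hchain.imp fun _ _ h => by omega)
  obtain ⟨⟨es₀, hw₀, hes₀⟩, ⟨es₁, hw₁, hes₁⟩⟩ := knodel_exists_walk hL j
  exact ⟨⟨es₀, hw₀, hasc hes₀⟩, ⟨es₁, hw₁, hasc hes₁⟩⟩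

end LabeledGraph

open LabeledGraph in
/-- If `n = 2^m` is a power of 2, the Knödel graph `W_{log₂ n, n}`
(here on `2 · 2^(m-1)` vertices) is a gossip graph: every ordered pair of vertices
is joined by an ascending path. -/
theorem knodel_pow_two_gossip (m : ℕ) (hm : 1 ≤ m) :
    ∀ u v : Fin 2 × Fin (2 ^ (m - 1)),
      ∃ es : List (Fin (knodel m (2 ^ (m - 1))).m),
        (knodel m (2 ^ (m - 1))).IsAscPath u v es := by
  rintro ⟨s, a⟩ ⟨s', b⟩
  open Fin.CommRing in
  obtain ⟨L, hchain, hle, hpar, hdisp⟩ := exists_isChain_knodelDisplacement_cast_eq (m - 1)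
    (s = s') (if s = 0 then b - a else a - b)
  obtain ⟨from₀, from₁⟩ :=
    knodel_exists_isAscPath (Δ := m) hchain (fun l hl => by have := hle l hl; omega) a
  fin_cases s <;> fin_cases s' <;>
    simp only [Fin.zero_eta, Fin.mk_one, Fin.isValue, iff_true, iff_false, zero_ne_one,
      one_ne_zero, ↓reduceIte] at hpar hdisp ⊢
  · simpa [hpar, hdisp] using from₀
  · simpa [hpar, hdisp] using from₀
  · simpa [hpar, hdisp] using from₁
  · simpa [hpar, hdisp] using from₁
end

section
/- For every even n, the edge sum W_{⌊log₂ n⌋, n} + W_{1,n} is a gossip graph: between every ordered pair of vertices there is an ascending path. -/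
/-!
An edge of label `a + 1` of `W_{Δ,n}` leads from column `x` on side `0` to column
`x + 2^a - 1` on side `1`. Appending one edge of label `k + 2` to the ascending paths with
labels `≤ k + 1` shows by induction on `k` that from either side of column `x` these paths reach
side `1` in every column of `[x, x + 2^k)` and side `0` in every column of `(x - 2^k, x]`.
For `k + 1 = ⌊log₂ n⌋` we have `n / 2 < 2^(k+1)`, so the two windows together meet every
column; a final edge of `W_{1,n}`, whose label exceeds every label of `W_{Δ,n}`, switches
to the other side of that column if necessary.
-/

namespace LabeledGraph

variable {V : Type}

theorem IsWalk.append {G : LabeledGraph V} {u v w : V} {es es' : List (Fin G.m)}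
    (h₁ : G.IsWalk u v es) (h₂ : G.IsWalk v w es') : G.IsWalk u w (es ++ es') := by
  induction h₁ with
  | nil _ => exact h₂
  | cons he _ ih => exact .cons he (ih h₂)

theorem label_le_maxLabel (G : LabeledGraph V) (e : Fin G.m) : G.label e ≤ G.maxLabel :=
  Finset.le_sup (f := G.label) (Finset.mem_univ e)

theorem IsAscPath.nil (G : LabeledGraph V) (v : V) : G.IsAscPath v v [] :=
  ⟨.nil v, List.isChain_nil⟩

theorem IsAscPath.snoc {G : LabeledGraph V} {u v w : V} {es : List (Fin G.m)} {e : Fin G.m}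
    (hp : G.IsAscPath u v es) (he : G.ends e = s(v, w))
    (hlt : ∀ e' ∈ es, G.label e' < G.label e) : G.IsAscPath u w (es ++ [e]) := by
  refine ⟨hp.1.append (.cons he (.nil w)), ?_⟩
  rw [List.map_append]
  refine hp.2.append (List.isChain_singleton _) fun x hx y hy => ?_
  obtain ⟨e', he', rfl⟩ := List.mem_map.mp (List.mem_of_mem_getLast? hx)
  obtain rfl : G.label e = y := by simpa using hy
  exact hlt e' he'

section edgeSum

variable (G₁ G₂ : LabeledGraph V)

def edgeSumInl (e : Fin G₁.m) : Fin (G₁.edgeSum G₂).m := Fin.castAdd G₂.m e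

def edgeSumInr (f : Fin G₂.m) : Fin (G₁.edgeSum G₂).m := Fin.natAdd G₁.m f

@[simp]
theorem edgeSum_ends_inl (e : Fin G₁.m) :
    (G₁.edgeSum G₂).ends (edgeSumInl G₁ G₂ e) = G₁.ends e := by
  simp [edgeSum, edgeSumInl]

@[simp]
theorem edgeSum_label_inl (e : Fin G₁.m) :
    (G₁.edgeSum G₂).label (edgeSumInl G₁ G₂ e) = G₁.label e := by
  simp [edgeSum, edgeSumInl]

@[simp]
theorem edgeSum_ends_inr (f : Fin G₂.m) :
    (G₁.edgeSum G₂).ends (edgeSumInr G₁ G₂ f) = G₂.ends f := by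
  simp [edgeSum, edgeSumInr]

@[simp]
theorem edgeSum_label_inr (f : Fin G₂.m) :
    (G₁.edgeSum G₂).label (edgeSumInr G₁ G₂ f) = G₂.label f + G₁.maxLabel := by
  simp [edgeSum, edgeSumInr]

variable {G₁ G₂}

theorem IsWalk.edgeSum_inl {u v : V} {es : List (Fin G₁.m)} (hw : G₁.IsWalk u v es) :
    (G₁.edgeSum G₂).IsWalk u v (es.map (edgeSumInl G₁ G₂)) := by
  induction hw with
  | nil v => exact .nil v
  | cons he _ ih => exact .cons (by rwa [edgeSum_ends_inl]) ih

theorem IsAscPath.edgeSum_inl {u v : V} {es : List (Fin G₁.m)} (hp : G₁.IsAscPath u v es) :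
    (G₁.edgeSum G₂).IsAscPath u v (es.map (edgeSumInl G₁ G₂)) :=
  ⟨hp.1.edgeSum_inl, by simpa [Function.comp_def] using hp.2⟩

theorem IsAscPath.edgeSum_snoc_inr {u v w : V} {es : List (Fin G₁.m)} {f : Fin G₂.m}
    (hp : G₁.IsAscPath u v es) (hf : G₂.ends f = s(v, w)) (hf₀ : 0 < G₂.label f) :
    (G₁.edgeSum G₂).IsAscPath u w (es.map (edgeSumInl G₁ G₂) ++ [edgeSumInr G₁ G₂ f]) := by
  refine hp.edgeSum_inl.snoc (by rwa [edgeSum_ends_inr]) fun e he => ?_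
  obtain ⟨e, -, rfl⟩ := List.mem_map.mp he
  have := G₁.label_le_maxLabel e
  simp only [edgeSum_label_inl, edgeSum_label_inr]
  omega

end edgeSum

def AscReach (G : LabeledGraph V) (n : ℕ) (u v : V) : Prop :=
  ∃ es, G.IsAscPath u v es ∧ ∀ e ∈ es, G.label e ≤ n

namespace AscReach

variable {G : LabeledGraph V} {n : ℕ} {u v w : V}

theorem refl (G : LabeledGraph V) (n : ℕ) (v : V) : G.AscReach n v v :=
  ⟨[], .nil G v, by simp⟩

theorem mono {n' : ℕ} (hr : G.AscReach n u v) (hn : n ≤ n') : G.AscReach n' u v := by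
  obtain ⟨es, hp, hes⟩ := hr
  exact ⟨es, hp, fun e he => (hes e he).trans hn⟩

theorem snoc {e : Fin G.m} (hr : G.AscReach n u v) (he : G.ends e = s(v, w))
    (hℓ : G.label e = n + 1) : G.AscReach (n + 1) u w := by
  obtain ⟨es, hp, hes⟩ := hr
  refine ⟨es ++ [e], hp.snoc he fun e' he' => by have := hes e' he'; omega, ?_⟩
  simp only [List.mem_append, List.mem_singleton]
  rintro e' (he' | rfl)
  · exact (hes e' he').trans n.le_succ
  · exact hℓ.le

end AscReach

section Knodel

variable {h : ℕ} [NeZero h]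

def col (h : ℕ) [NeZero h] (x : ℤ) : Fin h :=
  ⟨(x % h).toNat, by
    have hh := Nat.pos_of_neZero h
    have := Int.emod_lt_of_pos x (Int.natCast_pos.mpr hh)
    omega⟩

theorem col_eq_of_modEq {x y : ℤ} (hxy : x ≡ y [ZMOD h]) : col h x = col h y := by
  simp [col, hxy.eq]

theorem col_natCast (n : ℕ) : col h n = ⟨n % h, Nat.mod_lt n (Nat.pos_of_neZero h)⟩ := by
  ext
  simp only [col, ← Int.natCast_emod, Int.toNat_natCast]

theorem col_modEq (x : ℤ) : ((col h x : ℕ) : ℤ) ≡ x [ZMOD h] := by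
  have := Int.emod_nonneg x (Int.natCast_ne_zero.mpr (NeZero.ne h))
  simpa [col, Int.toNat_of_nonneg this] using Int.mod_modEq x h

@[simp]
theorem col_val (j : Fin h) : col h j = j := by
  ext
  simp [col, Int.emod_eq_of_lt]

theorem exists_knodel_edge {Δ a : ℕ} (ha : a < Δ) (x : ℤ) :
    ∃ e : Fin (knodel Δ h).m, (knodel Δ h).label e = a + 1 ∧
      (knodel Δ h).ends e = s((0, col h x), (1, col h (x + (2 ^ a - 1)))) := by
  set c := (col h x).val
  have hch : c < h := (col h x).isLt
  have hmod : (a * h + c) % h = c := by rw [Nat.mul_add_mod_self_right, Nat.mod_eq_of_lt hch]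
  have hdiv : (a * h + c) / h = a := by
    rw [Nat.add_comm, Nat.add_mul_div_right _ _ (Nat.pos_of_neZero h), Nat.div_eq_of_lt hch]; simp
  refine ⟨⟨a * h + c, ?_⟩, ?_, ?_⟩
  · show a * h + c < Δ * h
    nlinarith
  · simp [knodel, hdiv]
  · simp only [knodel, hmod, hdiv]
    have hshift : ((c + (2 ^ a - 1) : ℕ) : ℤ) ≡ x + (2 ^ a - 1) [ZMOD h] := by
      push_cast [Nat.one_le_two_pow]
      exact (col_modEq x).add_right _
    rw [← col_natCast, col_eq_of_modEq hshift]

theorem exists_knodel_rung {Δ : ℕ} (hΔ : 0 < Δ) (j : Fin h) {ε ε' : Fin 2} (hε : ε ≠ ε') :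
    ∃ e : Fin (knodel Δ h).m, (knodel Δ h).label e = 1 ∧
      (knodel Δ h).ends e = s((ε, j), (ε', j)) := by
  obtain ⟨e, hℓ, he⟩ := exists_knodel_edge (h := h) hΔ (j : ℤ)
  simp only [pow_zero, sub_self, add_zero, col_val] at hℓ he
  fin_cases ε <;> fin_cases ε'
  · exact absurd rfl hε
  · exact ⟨e, hℓ, he⟩
  · exact ⟨e, hℓ, he.trans Sym2.eq_swap⟩
  · exact absurd rfl hε

theorem knodel_ascReach_one {Δ : ℕ} (hΔ : 0 < Δ) (ε ε' : Fin 2) (j : Fin h) :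
    (knodel Δ h).AscReach 1 (ε, j) (ε', j) := by
  by_cases hε : ε = ε'
  · subst hε
    exact AscReach.refl _ 1 _
  · obtain ⟨e, hℓ, he⟩ := exists_knodel_rung hΔ j hε
    exact (AscReach.refl _ 0 _).snoc he hℓ

theorem knodel_ascReach {Δ k : ℕ} (hk : k < Δ) (ε : Fin 2) (x t : ℤ) (ht₀ : 0 ≤ t)
    (ht : t < 2 ^ k) :
    (knodel Δ h).AscReach (k + 1) (ε, col h x) (1, col h (x + t)) ∧
      (knodel Δ h).AscReach (k + 1) (ε, col h x) (0, col h (x - t)) := by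
  induction k generalizing t with
  | zero =>
    obtain rfl : t = 0 := by omega
    simpa using ⟨knodel_ascReach_one (by omega) ε 1 _, knodel_ascReach_one (by omega) ε 0 _⟩
  | succ k ih =>
    by_cases hsmall : t < 2 ^ k
    · obtain ⟨h₁, h₀⟩ := ih (by omega) t ht₀ hsmall
      exact ⟨h₁.mono k.succ.le_succ, h₀.mono k.succ.le_succ⟩
    -- The last edge, of label `k + 2`, has length `2^(k+1) - 1 = t + s` with `0 ≤ s < 2^k`.
    set s := 2 ^ (k + 1) - 1 - t with hs
    have hpow : (2 : ℤ) ^ (k + 1) = 2 * 2 ^ k := by ring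
    obtain ⟨h₁, h₀⟩ := ih (by omega) s (by omega) (by omega)
    obtain ⟨e₀, hℓ₀, he₀⟩ := exists_knodel_edge (h := h) hk (x - s)
    obtain ⟨e₁, hℓ₁, he₁⟩ := exists_knodel_edge (h := h) hk (x - t)
    rw [show x - s + (2 ^ (k + 1) - 1) = x + t by omega] at he₀
    rw [show x - t + (2 ^ (k + 1) - 1) = x + s by omega] at he₁
    exact ⟨h₀.snoc he₀ hℓ₀, h₁.snoc (he₁.trans Sym2.eq_swap) hℓ₁⟩

theorem exists_knodel_ascPath_to_column {Δ : ℕ} (hΔ : h < 2 ^ Δ) (u : Fin 2 × Fin h)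
    (j : Fin h) : ∃ ε es, (knodel Δ h).IsAscPath u (ε, j) es := by
  obtain ⟨ε₀, i⟩ := u
  have hh : (0 : ℤ) < h := Int.natCast_pos.mpr (Nat.pos_of_neZero h)
  obtain ⟨k, rfl⟩ : ∃ k, Δ = k + 1 := Nat.exists_eq_succ_of_ne_zero <| by
    rintro rfl
    simpa using hΔ.trans_le' (Nat.pos_of_neZero h)
  have hpow : (h : ℤ) < 2 * 2 ^ k := by rw [← pow_succ']; exact_mod_cast hΔ
  set d := ((j : ℤ) - i) % h
  have hd₀ : 0 ≤ d := Int.emod_nonneg _ hh.ne'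
  have hdh : d < h := Int.emod_lt_of_pos _ hh
  have hd : i + d ≡ j [ZMOD h] := by simpa using (Int.mod_modEq ((j : ℤ) - i) h).add_left i
  have hreach := knodel_ascReach (h := h) k.lt_succ_self ε₀ i
  rw [col_val] at hreach
  by_cases hsmall : d < 2 ^ k
  · obtain ⟨es, hp, -⟩ := (hreach d hd₀ hsmall).1
    exact ⟨1, es, by rwa [col_eq_of_modEq hd, col_val] at hp⟩
  · -- Otherwise `j` lies less than `2^k` columns to the left of `i`.
    have hwrap : i - (h - d) ≡ j [ZMOD h] := by
      rw [show (i : ℤ) - (h - d) = i + d + (-1) * h by ring]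
      exact (Int.add_mul_emod_self_right _ _ _).trans hd
    obtain ⟨es, hp, -⟩ := (hreach (h - d) (by omega) (by omega)).2
    exact ⟨0, es, by rwa [col_eq_of_modEq hwrap, col_val] at hp⟩

end Knodel

end LabeledGraph

open LabeledGraph in
theorem knodel_edgeSum_gossip_general (h : ℕ) :
    ∀ u v : Fin 2 × Fin h,
      ∃ es : List (Fin ((knodel (Nat.log 2 (2 * h)) h).edgeSum (knodel 1 h)).m),
        ((knodel (Nat.log 2 (2 * h)) h).edgeSum (knodel 1 h)).IsAscPath u v es := by
  intro u ⟨ε', j⟩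
  have : NeZero h := ⟨j.pos.ne'⟩
  have hΔ : h < 2 ^ Nat.log 2 (2 * h) := by
    have := Nat.lt_pow_succ_log_self one_lt_two (2 * h)
    rw [pow_succ] at this
    omega
  obtain ⟨ε, es, hp⟩ := exists_knodel_ascPath_to_column hΔ u j
  by_cases hε : ε = ε'
  · exact ⟨_, hε ▸ hp.edgeSum_inl⟩
  · obtain ⟨f, hℓ, hf⟩ := exists_knodel_rung (Δ := 1) one_pos j hε
    exact ⟨_, hp.edgeSum_snoc_inr hf (by omega)⟩

open LabeledGraph in
/-- For every even `n = 2h`, the edge sum `W_{⌊log₂ n⌋,n} + W_{1,n}`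
is a gossip graph: every ordered pair of vertices is joined by an ascending path. -/
theorem knodel_edgeSum_gossip (h : ℕ) (hh : 0 < h) :
    ∀ u v : Fin 2 × Fin h,
      ∃ es : List (Fin ((knodel (Nat.log 2 (2 * h)) h).edgeSum (knodel 1 h)).m),
        ((knodel (Nat.log 2 (2 * h)) h).edgeSum (knodel 1 h)).IsAscPath u v es :=
  knodel_edgeSum_gossip_general h
end
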